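/- arXiv:2011.04236 — 12 statements merged into one kernel-verified Lean document; each statement's English description precedes it below -/
import Mathlib

section
/- Let S be a finite semigroup that is locally idempotent (i.e., for every idempotent e, the subsemigroup eSe satisfies x² = x) and suppose that for every idempotent u the subsemigroup uSu satisfies the identity xyx = xy. Then for any idempotents e, i in S with ie = e and ei = i that have a common right unit f (i.e., an idempotent f with ef = e and if = i), we have e = i. -/
/-! Left multiplication by the common right unit `f` moves `e` and `i` into the local
subsemigroup `fSf`, where `x = fe` and `y = fi` satisfy `xy = y` and `yx = x`. The identity
`xyx = xy` then reads `x = y`, and multiplying `fe = fi` on the left by `e` gives `e = i`. -/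

def RightAction {Q S : Type*} [Semigroup S] (act : Q → S → Q) : Prop :=
  ∀ (q : Q) (s t : S), act (act q s) t = act q (s * t)

def Reach {Q S : Type*} (act : Q → S → Q) (x y : Q) : Prop :=
  x = y ∨ ∃ t : S, act x t = y

def LocIdem (S : Type*) [Semigroup S] : Prop :=
  ∀ e s : S, e * e = e → (e * s * e) * (e * s * e) = e * s * e

def LocXYXeqXY (S : Type*) [Semigroup S] : Prop :=
  ∀ e a b : S, e * e = e →
    (e * a * e) * (e * b * e) * (e * a * e) = (e * a * e) * (e * b * e)

def LocXYXeqYX (S : Type*) [Semigroup S] : Prop :=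
  ∀ e a b : S, e * e = e →
    (e * a * e) * (e * b * e) * (e * a * e) = (e * b * e) * (e * a * e)

theorem LocXYXeqXY.mul_mul_self_of_mem {S : Type*} [Semigroup S] (hloc : LocXYXeqXY S)
    {f a b : S} (hf : f * f = f) (ha : f * a * f = a) (hb : f * b * f = b) :
    a * b * a = a * b := by
  simpa only [ha, hb] using hloc f a b hf

theorem mul_left_eq_of_common_right_unit {S : Type*} [Semigroup S] (hloc : LocXYXeqXY S)
    {e i f : S} (hf : f * f = f) (hie : i * e = e) (hei : e * i = i)
    (hef : e * f = e) (hif : i * f = i) :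
    f * e = f * i := by
  have hfe : f * (f * e) * f = f * e := by rw [← mul_assoc, hf, mul_assoc, hef]
  have hfi : f * (f * i) * f = f * i := by rw [← mul_assoc, hf, mul_assoc, hif]
  have hxy : f * e * (f * i) = f * i := by rw [mul_assoc f e, ← mul_assoc e f i, hef, hei]
  have hyx : f * i * (f * e) = f * e := by rw [mul_assoc f i, ← mul_assoc i f e, hif, hie]
  simpa only [hxy, hyx] using hloc.mul_mul_self_of_mem hf hfe hfi

theorem stmt0_general {S : Type*} [Semigroup S]
    (hloc : LocXYXeqXY S)
    (e i f : S) (he : e * e = e) (hf : f * f = f)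
    (hie : i * e = e) (hei : e * i = i) (hef : e * f = e) (hif : i * f = i) :
    e = i := by
  calc e = e * (f * e) := by rw [← mul_assoc, hef, he]
    _ = e * (f * i) := by rw [mul_left_eq_of_common_right_unit hloc hf hie hei hef hif]
    _ = i := by rw [← mul_assoc, hef, hei]

theorem stmt0 {S : Type*} [Semigroup S] [Fintype S]
    (hli : LocIdem S) (hloc : LocXYXeqXY S)
    (e i f : S) (he : e * e = e) (hi : i * i = i) (hf : f * f = f)
    (hie : i * e = e) (hei : e * i = i) (hef : e * f = e) (hif : i * f = i) :
    e = i :=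
  stmt0_general hloc e i f he hf hie hei hef hif
end

section
/- Let S be a finite locally idempotent semigroup. If for some idempotent u the subsemigroup uSu does not satisfy the identity xyx = xy, then there exist two distinct idempotents e, i in S with i·e = e and e·i = i that have a common right unit in S. -/
section Semigroup

variable {S : Type*} [Semigroup S] {x y : S}

theorem IsIdempotentElem.mul_mul_self_of_mul (hx : IsIdempotentElem x)
    (hxy : IsIdempotentElem (x * y)) : IsIdempotentElem (x * y * x) :=
  calc x * y * x * (x * y * x) = x * y * (x * x) * y * x := by simp only [mul_assoc]
    _ = x * y * (x * y) * x := by rw [hx.eq]; simp only [mul_assoc]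
    _ = x * y * x := by rw [hxy.eq]

theorem IsIdempotentElem.mul_mul_mul_self_of_mul (hx : IsIdempotentElem x)
    (hxy : IsIdempotentElem (x * y)) : x * y * x * (x * y) = x * y :=
  calc x * y * x * (x * y) = x * y * (x * x) * y := by simp only [mul_assoc]
    _ = x * y * (x * y) := by rw [hx.eq]; simp only [mul_assoc]
    _ = x * y := hxy.eq

theorem IsIdempotentElem.mul_mul_mul_self_mul (hxy : IsIdempotentElem (x * y)) :
    x * y * (x * y * x) = x * y * x := by
  rw [← mul_assoc, hxy.eq]

end Semigroup

section LocIdem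

variable {S : Type*} [Semigroup S] {u x : S}

theorem LocIdem.isIdempotentElem_of_mul_eq (hli : LocIdem S) (hu : IsIdempotentElem u)
    (hl : u * x = x) (hr : x * u = x) : IsIdempotentElem x := by
  have hx : u * x * u = x := by rw [hl, hr]
  have hxx := hli u x hu
  rwa [hx] at hxx

end LocIdem

theorem stmt1_general {S : Type*} [Semigroup S]
    (hli : LocIdem S) (u a b : S) (hu : u * u = u)
    (h : (u * a * u) * (u * b * u) * (u * a * u) ≠ (u * a * u) * (u * b * u)) :
    ∃ e i f : S, e ≠ i ∧ e * e = e ∧ i * i = i ∧ i * e = e ∧ e * i = i ∧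
      f * f = f ∧ e * f = e ∧ i * f = i := by
  set x := u * a * u
  set y := u * b * u
  have hxl : u * x = x := by simp only [x, ← mul_assoc, hu]
  have hxr : x * u = x := by simp only [x, mul_assoc, hu]
  have hyr : y * u = y := by simp only [y, mul_assoc, hu]
  have hx : IsIdempotentElem x := hli.isIdempotentElem_of_mul_eq hu hxl hxr
  have hxy : IsIdempotentElem (x * y) :=
    hli.isIdempotentElem_of_mul_eq hu (by rw [← mul_assoc, hxl]) (by rw [mul_assoc, hyr])
  exact ⟨x * y, x * y * x, u, Ne.symm h, hxy, hx.mul_mul_self_of_mul hxy,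
    hx.mul_mul_mul_self_of_mul hxy, hxy.mul_mul_mul_self_mul, hu,
    by rw [mul_assoc, hyr], by rw [mul_assoc, hxr]⟩

theorem stmt1 {S : Type*} [Semigroup S] [Fintype S]
    (hli : LocIdem S) (u a b : S) (hu : u * u = u)
    (h : (u * a * u) * (u * b * u) * (u * a * u) ≠ (u * a * u) * (u * b * u)) :
    ∃ e i f : S, e ≠ i ∧ e * e = e ∧ i * i = i ∧ i * e = e ∧ e * i = i ∧
      f * f = f ∧ e * f = e ∧ i * f = i :=
  stmt1_general hli u a b hu h
end

section
/- Let S be a finite locally idempotent semigroup. Then S satisfies the identity xyx = xy locally (i.e., in every subsemigroup eSe for idempotent e) if and only if no two distinct idempotents e, i with i·e = e and e·i = i have a common right unit in S. -/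
/-!
If `e ≠ i` are idempotents with `ie = e`, `ei = i` and a common right unit `f`, then `x = fef`
and `y = fif` lie in the local monoid `fSf`, and multiplying `xyx = xy` on the left by `e`
collapses it to `e = i`. Conversely, for `x, y ∈ gSg` the elements `xy` and `xyx` are
idempotents of `gSg` (local idempotency) with `(xyx)(xy) = xy` and `(xy)(xyx) = xyx`, and `g`
is a right unit of both, so they must coincide.
-/

open Subsemigroup

section

variable {S : Type*} [Semigroup S]

theorem LocIdem.isIdempotentElem_of_mem_corner (hli : LocIdem S) {e r : S}
    (he : IsIdempotentElem e) (hr : r ∈ corner e) : IsIdempotentElem r := by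
  obtain ⟨s, rfl⟩ := hr
  exact hli e s he

theorem LocXYXeqXY.eq_of_common_right_unit (h : LocXYXeqXY S) {e i f : S}
    (he : IsIdempotentElem e) (hie : i * e = e) (hei : e * i = i) (hf : IsIdempotentElem f)
    (hef : e * f = e) (hif : i * f = i) : e = i := by
  have heX : e * (f * e * f) = e := by rw [← mul_assoc, ← mul_assoc, hef, he.eq, hef]
  have heY : e * (f * i * f) = i := by rw [← mul_assoc, ← mul_assoc, hef, hei, hif]
  have hiX : i * (f * e * f) = e := by rw [← mul_assoc, ← mul_assoc, hif, hie, hef]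
  calc e = e * (f * e * f) * (f * i * f) * (f * e * f) := by rw [heX, heY, hiX]
    _ = e * ((f * e * f) * (f * i * f) * (f * e * f)) := by simp only [mul_assoc]
    _ = e * ((f * e * f) * (f * i * f)) := by rw [h f e i hf]
    _ = i := by rw [← mul_assoc, heX, heY]

theorem locXYXeqXY_of_not_exists_common_right_unit (hli : LocIdem S)
    (h : ¬ ∃ e i f : S, e ≠ i ∧ e * e = e ∧ i * i = i ∧ i * e = e ∧ e * i = i ∧
      f * f = f ∧ e * f = e ∧ i * f = i) : LocXYXeqXY S := by
  intro g a b hg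
  have hx : g * a * g ∈ corner g := ⟨a, rfl⟩
  have hy : g * b * g ∈ corner g := ⟨b, rfl⟩
  set x := g * a * g
  set y := g * b * g
  have hxy := mul_mem hx hy
  have hxyx := mul_mem hxy hx
  have hx_idem : x * x = x := hli.isIdempotentElem_of_mem_corner hg hx
  have hxy_idem : x * y * (x * y) = x * y := hli.isIdempotentElem_of_mem_corner hg hxy
  by_contra hne
  refine h ⟨x * y, x * y * x, g, Ne.symm hne, hxy_idem,
    hli.isIdempotentElem_of_mem_corner hg hxyx, ?_, ?_, hg,
    ((mem_corner_iff hg).1 hxy).2, ((mem_corner_iff hg).1 hxyx).2⟩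
  · calc x * y * x * (x * y) = x * y * (x * x) * y := by simp only [mul_assoc]
      _ = x * y * x * y := by rw [hx_idem]
      _ = x * y * (x * y) := by simp only [mul_assoc]
      _ = x * y := hxy_idem
  · rw [← mul_assoc, hxy_idem]

end

theorem stmt2_general {S : Type*} [Semigroup S] (hli : LocIdem S) :
    LocXYXeqXY S ↔
      ¬ ∃ e i f : S, e ≠ i ∧ e * e = e ∧ i * i = i ∧ i * e = e ∧ e * i = i ∧
        f * f = f ∧ e * f = e ∧ i * f = i := by
  refine ⟨?_, locXYXeqXY_of_not_exists_common_right_unit hli⟩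
  rintro hxy ⟨e, i, f, hne, he, -, hie, hei, hf, hef, hif⟩
  exact hne (hxy.eq_of_common_right_unit he hie hei hf hef hif)

theorem stmt2 {S : Type*} [Semigroup S] [Fintype S] (hli : LocIdem S) :
    LocXYXeqXY S ↔
      ¬ ∃ e i f : S, e ≠ i ∧ e * e = e ∧ i * i = i ∧ i * e = e ∧ e * i = i ∧
        f * f = f ∧ e * f = e ∧ i * f = i :=
  stmt2_general hli
end

section
/- Let S be a finite locally idempotent semigroup. Then S satisfies the identity xyx = yx locally (in every eSe for idempotent e) if and only if no two distinct idempotents e, i with i·e = i and e·i = e have a common left unit in S (an idempotent f with f·e = e and f·i = i). -/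
/-!
Forward direction: if `e R i` are idempotents with a common left unit `f`, then in `fSf` the
elements `x = fef = ef` and `y = fif = if` satisfy `xyx = x` and `yx = y`, so the law
`xyx = yx` forces `ef = if`, and multiplying by `e` on the right gives `e = i`.

Backward direction: for `x = eae`, `y = ebe` the elements `yx` and `xyx` are idempotents of
`eSe` that are `R`-related (`yx · xyx = yx`, `xyx · yx = xyx`) and have `e` as common left
unit, hence they coincide.
-/

section

variable {S : Type*} [Semigroup S]

theorem local_mul_local {e : S} (he : e * e = e) (s t : S) :
    (e * s * e) * (e * t * e) = e * (s * e * t) * e := by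
  simp only [mul_assoc]
  rw [← mul_assoc e e (t * e), he]

theorem idem_mul_local {e : S} (he : e * e = e) (s : S) : e * (e * s * e) = e * s * e := by
  rw [← mul_assoc, ← mul_assoc, he]

theorem LocXYXeqYX.eq_of_common_left_unit (H : LocXYXeqYX S) {e i f : S} (he : e * e = e)
    (hie : i * e = i) (hei : e * i = e) (hf : f * f = f) (hfe : f * e = e) (hfi : f * i = i) :
    e = i := by
  have reassoc : ∀ {a b c : S}, a * b = c → ∀ x, a * (b * x) = c * x := fun h x => by
    rw [← mul_assoc, h]
  have hef : e * f = i * f := by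
    simpa only [mul_assoc, reassoc hfe, reassoc hfi, reassoc hei, reassoc hie, reassoc he]
      using H f e i hf
  calc e = e * f * e := by rw [mul_assoc, hfe, he]
    _ = i * f * e := by rw [hef]
    _ = i := by rw [mul_assoc, hfe, hie]

theorem locXYXeqYX_of_forall_eq (hli : LocIdem S)
    (h : ∀ e i f : S, e * e = e → i * i = i → i * e = i → e * i = e →
      f * f = f → f * e = e → f * i = i → e = i) :
    LocXYXeqYX S := by
  intro e a b he
  set x := e * a * e
  set y := e * b * e
  have hx : x * x = x := hli e a he
  have hyx : (y * x) * (y * x) = y * x := by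
    rw [local_mul_local he]; exact hli e _ he
  have hxyx : (x * y * x) * (x * y * x) = x * y * x := by
    rw [local_mul_local he, local_mul_local he]; exact hli e _ he
  have hR₁ : (x * y * x) * (y * x) = x * y * x := by
    calc (x * y * x) * (y * x) = x * ((y * x) * (y * x)) := by simp only [mul_assoc]
      _ = x * y * x := by rw [hyx, ← mul_assoc x y x]
  have hR₂ : (y * x) * (x * y * x) = y * x := by
    calc (y * x) * (x * y * x) = y * (x * x) * (y * x) := by simp only [mul_assoc]
      _ = y * x := by rw [hx, hyx]
  have hunit₁ : e * (y * x) = y * x := by rw [← mul_assoc, idem_mul_local he]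
  have hunit₂ : e * (x * y * x) = x * y * x := by
    rw [← mul_assoc e (x * y) x, ← mul_assoc e x y, idem_mul_local he]
  exact (h _ _ e hyx hxyx hR₁ hR₂ he hunit₁ hunit₂).symm

end

theorem stmt3_general {S : Type*} [Semigroup S] (hli : LocIdem S) :
    LocXYXeqYX S ↔
      ¬ ∃ e i f : S, e ≠ i ∧ e * e = e ∧ i * i = i ∧ i * e = i ∧ e * i = e ∧
        f * f = f ∧ f * e = e ∧ f * i = i := by
  constructor
  · rintro H ⟨e, i, f, hne, he, -, hie, hei, hf, hfe, hfi⟩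
    exact hne (H.eq_of_common_left_unit he hie hei hf hfe hfi)
  · intro h
    refine locXYXeqYX_of_forall_eq hli fun e i f he hi hie hei hf hfe hfi => ?_
    by_contra hne
    exact h ⟨e, i, f, hne, he, hi, hie, hei, hf, hfe, hfi⟩

theorem stmt3 {S : Type*} [Semigroup S] [Fintype S] (hli : LocIdem S) :
    LocXYXeqYX S ↔
      ¬ ∃ e i f : S, e ≠ i ∧ e * e = e ∧ i * i = i ∧ i * e = i ∧ e * i = e ∧
        f * f = f ∧ f * e = e ∧ f * i = i :=
  stmt3_general hli
end

section
/- Let S be a finite semigroup of transformations acting on a finite set Q (the transition semigroup of a DFA). Suppose S is locally idempotent. Let p, q ∈ Q be such that there is an idempotent e ∈ S with p·e = p and q·e = q, and let s ∈ S be such that q is reachable from p·s (i.e., p·s·b = q for some b ∈ S, or p·s = q). Then q is reachable from q·s. -/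
/-! With `c := e (s b) e`, where `p s b = q`, the fixed points `p, q` of `e` give `p c = q`.
Local idempotency makes `c` idempotent, so `q c = p c c = p c = q`; hence `(q s)(b e) = q e s b e = q c = q`. -/

theorem Reach.exists_act_eq_of_act_eq_self {Q S : Type*} {act : Q → S → Q} {x y : Q} {e : S}
    (hye : act y e = y) (h : Reach act x y) : ∃ t : S, act x t = y := by
  rcases h with rfl | hxt
  · exact ⟨e, hye⟩
  · exact hxt

namespace RightAction

variable {Q S : Type*} [Semigroup S] {act : Q → S → Q}

theorem act_eq_self_of_idempotent (hact : RightAction act) {p q : Q} {c : S} (hc : c * c = c)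
    (hpc : act p c = q) : act q c = q := by
  rw [← hpc, hact, hc]

end RightAction

theorem stmt5_general {Q S : Type*} [Semigroup S]
    (act : Q → S → Q) (hact : RightAction act) (hli : LocIdem S)
    (p q : Q) (e : S) (he : e * e = e)
    (hpe : act p e = p) (hqe : act q e = q)
    (s : S) (h : Reach act (act p s) q) :
    Reach act (act q s) q := by
  obtain ⟨b, hb⟩ := h.exists_act_eq_of_act_eq_self hqe
  have hpc : act p (e * (s * b) * e) = q := by
    rw [← hact, ← hact, hpe, ← hact, hb, hqe]
  have hqc : act q (e * (s * b) * e) = q :=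
    hact.act_eq_self_of_idempotent (hli e (s * b) he) hpc
  refine Or.inr ⟨b * e, ?_⟩
  calc act (act q s) (b * e) = act (act q e) (s * (b * e)) := by rw [hqe, hact]
    _ = act q (e * (s * b) * e) := by rw [hact]; simp only [mul_assoc]
    _ = q := hqc

theorem stmt5 {Q S : Type*} [Fintype Q] [Semigroup S] [Fintype S]
    (act : Q → S → Q) (hact : RightAction act) (hli : LocIdem S)
    (p q : Q) (e : S) (he : e * e = e)
    (hpe : act p e = p) (hqe : act q e = q)
    (s : S) (h : Reach act (act p s) q) :
    Reach act (act q s) q :=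
  stmt5_general act hact hli p q e he hpe hqe s h
end

section
/- Let S be a finite locally idempotent transformation semigroup acting on a finite set Q. Suppose p, q, r ∈ Q have a common right unit e (an idempotent with p·e = p, q·e = q, r·e = r), and there exists s ∈ S with p·s = q and q·s = r. Then r and q are in the same strongly connected component: q is reachable from r and r is reachable from q. -/
/-! With `f = e s e`, idempotent by local idempotence, the common right unit `e` gives
`p·f = q` and `q·f = r`. Hence `r = p·f·f = p·f = q`, so `q` and `r` coincide. -/

section RightAction

variable {Q S : Type*} [Semigroup S] {act : Q → S → Q}

theorem RightAction.act_sandwich (hact : RightAction act) {x : Q} {e s : S}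
    (hx : act x e = x) (hxs : act (act x s) e = act x s) :
    act x (e * s * e) = act x s := by
  rw [← hact, ← hact, hx, hxs]

theorem RightAction.act_act_of_idempotent (hact : RightAction act) (x : Q) {f : S}
    (hf : f * f = f) : act (act x f) f = act x f := by
  rw [hact, hf]

end RightAction

theorem Reach.of_eq {Q S : Type*} {act : Q → S → Q} {x y : Q} (h : x = y) : Reach act x y :=
  Or.inl h

theorem stmt6_general {Q S : Type*} [Semigroup S]
    (act : Q → S → Q) (hact : RightAction act) (hli : LocIdem S)
    (p q r : Q) (e : S) (he : e * e = e)
    (hpe : act p e = p) (hqe : act q e = q) (hre : act r e = r)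
    (s : S) (hps : act p s = q) (hqs : act q s = r) :
    Reach act r q ∧ Reach act q r := by
  have hpf : act p (e * s * e) = q := by
    rw [hact.act_sandwich hpe (by rw [hps, hqe]), hps]
  have hqf : act q (e * s * e) = r := by
    rw [hact.act_sandwich hqe (by rw [hqs, hre]), hqs]
  have hqr : q = r := by
    rw [← hqf, ← hpf, hact.act_act_of_idempotent p (hli e s he)]
  exact ⟨.of_eq hqr.symm, .of_eq hqr⟩

theorem stmt6 {Q S : Type*} [Fintype Q] [Semigroup S] [Fintype S]
    (act : Q → S → Q) (hact : RightAction act) (hli : LocIdem S)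
    (p q r : Q) (e : S) (he : e * e = e)
    (hpe : act p e = p) (hqe : act q e = q) (hre : act r e = r)
    (s : S) (hps : act p s = q) (hqs : act q s = r) :
    Reach act r q ∧ Reach act q r :=
  stmt6_general act hact hli p q r e he hpe hqe hre s hps hqs
end

section
/- Let S be the finite transition semigroup of a DFA acting on state set Q. Then S is right locally testable (locally idempotent and locally satisfying xyx = xy) if and only if: (1) for every pair of states p, q with a common right unit, if p and q are mutually reachable then p = q; and (2) for every pair (p,q) with a common right unit and every s ∈ S, if q is reachable from p·s then q is reachable from q·s. -/
/-! If `p·t = q` and `q·u = p` with common right unit `e`, then `x = ete` and `y = eue` satisfy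
`p·x = q` and `p·xy = p`, so `xyx = xy` forces `q = p·xyx = p·xy = p`. If `p·st = q`, then
`w = e(st)e` satisfies `p·w = q` and `w·(ste) = w² = w`, so `q·(ste) = q`.
Conversely, let `x ∈ eSe` and let `p, r` be fixed by `e` with `r` reachable from `p·x`. By (2), `r`
is reachable from `r·x`, which is reachable from `r`, so (1) gives `r·x = r`. Taking `p = q·e`,
`r = q·x` yields `q·x² = q·x`, and taking `p = q·x`, `r = q·xy` yields `q·xyx = q·xy`;
faithfulness turns these into identities of `S`. -/

section

variable {Q S : Type*} [Semigroup S]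

def CommonUnitReachAntisymm (act : Q → S → Q) : Prop :=
  ∀ (p q : Q) (e : S), e * e = e → act p e = p → act q e = q →
    Reach act p q → Reach act q p → p = q

def CommonUnitReachStable (act : Q → S → Q) : Prop :=
  ∀ (p q : Q) (e : S), e * e = e → act p e = p → act q e = q →
    ∀ s : S, Reach act (act p s) q → Reach act (act q s) q

variable {act : Q → S → Q}

theorem commonUnitReachAntisymm_of_locXYXeqXY (hact : RightAction act)
    (hS : LocXYXeqXY S) : CommonUnitReachAntisymm act := by
  rintro p q e he hpe hqe (rfl | ⟨t, hpq⟩) (hqp | ⟨u, hqp⟩)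
  · rfl
  · rfl
  · exact hqp.symm
  have hx : act p (e * t * e) = q := by rw [← hact, ← hact, hpe, hpq, hqe]
  have hy : act q (e * u * e) = p := by rw [← hact, ← hact, hqe, hqp, hpe]
  have hxy : act p (e * t * e * (e * u * e)) = p := by rw [← hact, hx, hy]
  calc p = act p (e * t * e * (e * u * e)) := hxy.symm
    _ = act p (e * t * e * (e * u * e) * (e * t * e)) := by rw [hS e t u he]
    _ = q := by rw [← hact, hxy, hx]

theorem act_mul_mul_eq_self_of_locIdem (hact : RightAction act) (hS : LocIdem S)
    {p q : Q} {e s t : S} (he : e * e = e) (hpe : act p e = p) (hqe : act q e = q)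
    (h : act p (s * t) = q) : act q (s * (t * e)) = q := by
  have hw : act p (e * (s * t) * e) = q := by rw [← hact, ← hact, hpe, h, hqe]
  have hww : e * (s * t) * e * (s * (t * e)) = e * (s * t) * e := by
    calc e * (s * t) * e * (s * (t * e)) = e * (s * t) * e * (e * (s * t) * e) := by
          simp only [mul_assoc, ← mul_assoc e e, he]
      _ = e * (s * t) * e := hS e (s * t) he
  rw [← hw, hact, hww]

theorem commonUnitReachStable_of_locIdem (hact : RightAction act) (hS : LocIdem S) :
    CommonUnitReachStable act := by
  rintro p q e he hpe hqe s (h | ⟨t, h⟩)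
  · have hse : act p (s * e) = q := by rw [← hact, h, hqe]
    refine Or.inr ⟨e * e, ?_⟩
    rw [hact, act_mul_mul_eq_self_of_locIdem hact hS he hpe hqe hse]
  · refine Or.inr ⟨t * e, ?_⟩
    rw [hact, act_mul_mul_eq_self_of_locIdem hact hS he hpe hqe (by rw [← hact, h])]

theorem act_eq_self_of_reach_act (hact : RightAction act)
    (h₁ : CommonUnitReachAntisymm act) (h₂ : CommonUnitReachStable act)
    {p r : Q} {e x : S} (he : e * e = e) (hxe : x * e = x) (hpe : act p e = p)
    (hre : act r e = r) (h : Reach act (act p x) r) : act r x = r :=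
  h₁ _ _ e he (by rw [hact, hxe]) hre (h₂ p r e he hpe hre x h) (Or.inr ⟨x, rfl⟩)

variable (hact : RightAction act) (hfaith : ∀ s t : S, (∀ q : Q, act q s = act q t) → s = t)
  (h₁ : CommonUnitReachAntisymm act) (h₂ : CommonUnitReachStable act)
include hact hfaith h₁ h₂

theorem locIdem_of_commonUnit : LocIdem S := by
  intro e s he
  set x := e * s * e
  have hex : e * x = x := by rw [← mul_assoc, ← mul_assoc, he]
  have hxe : x * e = x := by rw [mul_assoc, he]
  apply hfaith
  intro q
  rw [← hact]
  exact act_eq_self_of_reach_act hact h₁ h₂ (p := act q e) he hxe (by rw [hact, he])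
    (by rw [hact, hxe]) (Or.inl (by rw [hact, hex]))

theorem locXYXeqXY_of_commonUnit : LocXYXeqXY S := by
  intro e a b he
  set x := e * a * e
  set y := e * b * e
  have hxx : x * x = x := locIdem_of_commonUnit hact hfaith h₁ h₂ e a he
  have hxe : x * e = x := by rw [mul_assoc, he]
  have hye : y * e = y := by rw [mul_assoc, he]
  apply hfaith
  intro q
  rw [← hact, ← hact q x]
  exact act_eq_self_of_reach_act hact h₁ h₂ (p := act q x) he hxe (by rw [hact, hxe])
    (by rw [hact, hye]) (Or.inr ⟨y, by rw [hact q x x, hxx]⟩)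

end

theorem stmt10_general {Q S : Type*} [Semigroup S]
    (act : Q → S → Q) (hact : RightAction act)
    (hfaith : ∀ s t : S, (∀ q : Q, act q s = act q t) → s = t) :
    (LocIdem S ∧ LocXYXeqXY S) ↔
      ((∀ (p q : Q) (e : S), e * e = e → act p e = p → act q e = q →
          Reach act p q → Reach act q p → p = q) ∧
       (∀ (p q : Q) (e : S), e * e = e → act p e = p → act q e = q →
          ∀ s : S, Reach act (act p s) q → Reach act (act q s) q)) :=
  ⟨fun ⟨hidem, hxyx⟩ => ⟨commonUnitReachAntisymm_of_locXYXeqXY hact hxyx,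
      commonUnitReachStable_of_locIdem hact hidem⟩,
    fun ⟨h₁, h₂⟩ => ⟨locIdem_of_commonUnit hact hfaith h₁ h₂,
      locXYXeqXY_of_commonUnit hact hfaith h₁ h₂⟩⟩

theorem stmt10 {Q S : Type*} [Fintype Q] [Semigroup S] [Fintype S]
    (act : Q → S → Q) (hact : RightAction act)
    (hfaith : ∀ s t : S, (∀ q : Q, act q s = act q t) → s = t) :
    (LocIdem S ∧ LocXYXeqXY S) ↔
      ((∀ (p q : Q) (e : S), e * e = e → act p e = p → act q e = q →
          Reach act p q → Reach act q p → p = q) ∧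
       (∀ (p q : Q) (e : S), e * e = e → act p e = p → act q e = q →
          ∀ s : S, Reach act (act p s) q → Reach act (act q s) q)) :=
  stmt10_general act hact hfaith
end

section
/- Let S be the finite transition semigroup of a DFA acting on state set Q, and suppose S is left locally testable (locally idempotent and locally satisfying xyx = yx). Suppose p, q ∈ Q have a common right unit e (idempotent with p·e = p, q·e = q) and q is reachable from p. Then for every s ∈ S: q is reachable from p·s if and only if q is reachable from q·s. -/
/-!
Since `q·e = q`, reachability of `q` from `x` just means `x·t = q` for some `t`, and since `e`
is a right unit of both `p` and `q`, such a `t` may be replaced by the local element `e t e`.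
If `p·w = q`, then `e w e` is idempotent, so it fixes `q`; this gives `q·s ⇝ q` from `p·s ⇝ q`.
Conversely, if `a = e w e` fixes `q` and `b = e u e` takes `p` to `q`, then
`p·(a b a) = p·(b a) = q·a = q` by `xyx = yx`, and `a b a` begins with `w`.
-/

theorem reach_iff_exists_act_eq {Q S : Type*} {act : Q → S → Q} {x q : Q} {e : S}
    (hqe : act q e = q) : Reach act x q ↔ ∃ t, act x t = q := by
  refine ⟨?_, Or.inr⟩
  rintro (rfl | h)
  · exact ⟨e, hqe⟩
  · exact h

section

variable {Q S : Type*} [Semigroup S] {act : Q → S → Q}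

theorem act_sandwich_eq (hact : RightAction act) {p q : Q} {e w : S}
    (hpe : act p e = p) (hqe : act q e = q) (h : act p w = q) :
    act p (e * w * e) = q := by
  rw [← hact, ← hact, hpe, h, hqe]

theorem act_eq_self_of_idempotent (hact : RightAction act) {p q : Q} {w : S}
    (hw : w * w = w) (h : act p w = q) : act q w = q := by
  rw [← h, hact, hw]

theorem act_mul_eq_self_of_locIdem (hact : RightAction act) (hli : LocIdem S)
    {p q : Q} {e w : S} (he : e * e = e) (hpe : act p e = p) (hqe : act q e = q)
    (h : act p w = q) : act q (w * e) = q := by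
  have hfix : act q (e * w * e) = q :=
    act_eq_self_of_idempotent hact (hli e w he) (act_sandwich_eq hact hpe hqe h)
  rwa [mul_assoc, ← hact, hqe] at hfix

theorem exists_act_mul_eq_of_locXYXeqYX (hact : RightAction act) (hloc : LocXYXeqYX S)
    {p q : Q} {e w : S} (he : e * e = e) (hpe : act p e = p) (hqe : act q e = q)
    (hreach : Reach act p q) (hw : act q w = q) : ∃ v, act p (w * v) = q := by
  obtain ⟨u, hu⟩ := (reach_iff_exists_act_eq hqe).1 hreach
  set a := e * w * e
  set b := e * u * e
  have ha : act q a = q := act_sandwich_eq hact hqe hqe hw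
  have hb : act p b = q := act_sandwich_eq hact hpe hqe hu
  have haba : act p (a * b * a) = q := by
    rw [hloc e w u he, ← hact, hb, ha]
  refine ⟨e * (b * a), ?_⟩
  rwa [show a * b * a = e * (w * (e * (b * a))) by simp only [a, mul_assoc], ← hact, hpe]
    at haba

end

theorem stmt11_general {Q S : Type*} [Semigroup S]
    (act : Q → S → Q) (hact : RightAction act)
    (hli : LocIdem S) (hloc : LocXYXeqYX S)
    (p q : Q) (e : S) (he : e * e = e)
    (hpe : act p e = p) (hqe : act q e = q)
    (hreach : Reach act p q) :
    ∀ s : S, Reach act (act p s) q ↔ Reach act (act q s) q := by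
  intro s
  simp only [reach_iff_exists_act_eq hqe, hact p s, hact q s]
  constructor
  · rintro ⟨t, ht⟩
    exact ⟨t * e, by rw [← mul_assoc]; exact act_mul_eq_self_of_locIdem hact hli he hpe hqe ht⟩
  · rintro ⟨t, ht⟩
    obtain ⟨v, hv⟩ := exists_act_mul_eq_of_locXYXeqYX hact hloc he hpe hqe hreach ht
    exact ⟨t * v, by rwa [← mul_assoc]⟩

theorem stmt11 {Q S : Type*} [Fintype Q] [Semigroup S] [Fintype S]
    (act : Q → S → Q) (hact : RightAction act)
    (hli : LocIdem S) (hloc : LocXYXeqYX S)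
    (p q : Q) (e : S) (he : e * e = e)
    (hpe : act p e = p) (hqe : act q e = q)
    (hreach : Reach act p q) :
    ∀ s : S, Reach act (act p s) q ↔ Reach act (act q s) q :=
  stmt11_general act hact hli hloc p q e he hpe hqe hreach
end

section
/- Let S be the finite transition semigroup of a DFA acting on state set Q, and suppose S is left locally testable. Suppose p, q, r ∈ Q have a common right unit (an idempotent e fixing all three), there exists s ∈ S with p·s = q and r·s = r, and there exists t ∈ S with p·t = r and q·t = q. Then r = q. -/
/-! Put `f = e s e` and `g = e t e`. Since `e` fixes `p`, `q`, `r`, these act like `s` and `t`: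
`p·f = q`, `r·f = r`, `p·g = r`, `q·g = q`, and idempotency of `f` gives `q·f = p·f² = q`.
Evaluating the identity `f g f = g f` of `eSe` at `p` yields `q = p·fgf = p·gf = r`. -/

namespace RightAction

variable {Q S : Type*} [Semigroup S] {act : Q → S → Q}

theorem act_mul (hact : RightAction act) (x : Q) (a b : S) :
    act x (a * b) = act (act x a) b :=
  (hact x a b).symm

theorem act_conj_eq (hact : RightAction act) {e a : S} {x y : Q}
    (hx : act x e = x) (hy : act y e = y) (hxy : act x a = y) :
    act x (e * a * e) = y := by
  rw [hact.act_mul, hact.act_mul, hx, hxy, hy]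

theorem act_act_eq_of_isIdempotentElem (hact : RightAction act) {f : S}
    (hf : IsIdempotentElem f) (x : Q) :
    act (act x f) f = act x f := by
  rw [hact, hf.eq]

end RightAction

theorem stmt12_general {Q S : Type*} [Semigroup S]
    (act : Q → S → Q) (hact : RightAction act)
    (hli : LocIdem S) (hloc : LocXYXeqYX S)
    (p q r : Q) (e : S) (he : e * e = e)
    (hpe : act p e = p) (hqe : act q e = q) (hre : act r e = r)
    (s : S) (hps : act p s = q) (hrs : act r s = r)
    (t : S) (hpt : act p t = r) (hqt : act q t = q) :
    r = q := by
  obtain ⟨f, hf⟩ : ∃ f, f = e * s * e := ⟨_, rfl⟩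
  obtain ⟨g, hg⟩ : ∃ g, g = e * t * e := ⟨_, rfl⟩
  have hpf : act p f = q := hf ▸ hact.act_conj_eq hpe hqe hps
  have hrf : act r f = r := hf ▸ hact.act_conj_eq hre hre hrs
  have hpg : act p g = r := hg ▸ hact.act_conj_eq hpe hre hpt
  have hqg : act q g = q := hg ▸ hact.act_conj_eq hqe hqe hqt
  have hqf : act q f = q := by
    rw [← hpf, hact.act_act_eq_of_isIdempotentElem (hf ▸ hli e s he)]
  have hfgf : f * g * f = g * f := hf ▸ hg ▸ hloc e s t he
  calc r = act p (g * f) := by rw [hact.act_mul, hpg, hrf]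
    _ = act p (f * g * f) := by rw [hfgf]
    _ = q := by rw [hact.act_mul, hact.act_mul, hpf, hqg, hqf]

theorem stmt12 {Q S : Type*} [Fintype Q] [Semigroup S] [Fintype S]
    (act : Q → S → Q) (hact : RightAction act)
    (hli : LocIdem S) (hloc : LocXYXeqYX S)
    (p q r : Q) (e : S) (he : e * e = e)
    (hpe : act p e = p) (hqe : act q e = q) (hre : act r e = r)
    (s : S) (hps : act p s = q) (hrs : act r s = r)
    (t : S) (hpt : act p t = r) (hqt : act q t = q) :
    r = q :=
  stmt12_general act hact hli hloc p q r e he hpe hqe hre s hps hrs t hpt hqt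
end

section
/- Let S be the finite transition semigroup of a DFA acting on state set Q. Then S is left locally testable if and only if: (1) S is locally idempotent; (2) for every pair p, q with a common right unit such that q is reachable from p, and every s ∈ S, q is reachable from p·s if and only if q is reachable from q·s; and (3) whenever p, q, r have a common right unit and there are s, t ∈ S with p·s = q, r·s = r, p·t = r, q·t = q (with s, t in eSe), then r = q. -/
/-!
In the local monoid `eSe` (membership written `x = e * x * e`) of a left locally testable
semigroup every element `u` is idempotent and `xu = uxu`. So if `p·u = q` with `u ∈ eSe`, the
states `p` and `q` agree on every `y·u`: right-multiplying a path from `p·s` (or from `q·s`)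
to `q` by `u` turns it into a path from the other one. Conversely, for `x, y ∈ eSe` the states
`p = z·e`, `q = z·xyx`, `r = z·yx` satisfy the hypotheses of condition (3) with `s = xyx`,
`t = yx`, and faithfulness of the action turns `z·yx = z·xyx` for all `z` into `xyx = yx`.
-/

section Corner

variable {S : Type*} [Semigroup S] {e x y : S}

theorem idem_mul_of_mem_corner (he : e * e = e) (hx : x = e * x * e) : e * x = x := by
  rw [hx, ← mul_assoc, ← mul_assoc, he]

theorem mul_idem_of_mem_corner (he : e * e = e) (hx : x = e * x * e) : x * e = x := by
  rw [hx, mul_assoc, he]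

theorem mul_mem_corner (he : e * e = e) (hx : x = e * x * e) (hy : y = e * y * e) :
    x * y = e * (x * y) * e := by
  rw [← mul_assoc, idem_mul_of_mem_corner he hx, mul_assoc, mul_idem_of_mem_corner he hy]

theorem mem_corner (he : e * e = e) (a : S) : e * a * e = e * (e * a * e) * e := by
  have hee : ∀ z, e * (e * z) = e * z := fun z => by rw [← mul_assoc, he]
  simp only [mul_assoc, he, hee]

theorem LocIdem.mul_self (h : LocIdem S) (he : e * e = e) (hx : x = e * x * e) : x * x = x := by
  have := h e x he
  rwa [← hx] at this

theorem LocXYXeqYX.mul_mul_self (h : LocXYXeqYX S) (he : e * e = e) (hx : x = e * x * e)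
    (hy : y = e * y * e) : x * y * x = y * x := by
  have := h e x y he
  rwa [← hx, ← hy] at this

theorem LocIdem.yx_mul_xyx (h : LocIdem S) (he : e * e = e) (hx : x = e * x * e)
    (hy : y = e * y * e) : y * x * (x * y * x) = y * x := by
  calc y * x * (x * y * x) = y * (x * x) * (y * x) := by simp only [mul_assoc]
    _ = (y * x) * (y * x) := by rw [h.mul_self he hx, mul_assoc]
    _ = y * x := h.mul_self he (mul_mem_corner he hy hx)

theorem LocIdem.xyx_mul_yx (h : LocIdem S) (he : e * e = e) (hx : x = e * x * e)
    (hy : y = e * y * e) : x * y * x * (y * x) = x * y * x := by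
  calc x * y * x * (y * x) = x * ((y * x) * (y * x)) := by simp only [mul_assoc]
    _ = x * y * x := by rw [h.mul_self he (mul_mem_corner he hy hx), mul_assoc]

theorem locXYXeqYX_of_forall_mem_corner
    (h : ∀ e x y : S, e * e = e → x = e * x * e → y = e * y * e → x * y * x = y * x) :
    LocXYXeqYX S :=
  fun e a b he => h e _ _ he (mem_corner he a) (mem_corner he b)

end Corner

section Action

variable {Q S : Type*} [Semigroup S] {act : Q → S → Q} {e s t u : S} {p q r : Q}

theorem Reach.exists_mem_corner (hact : RightAction act) (he : e * e = e) (hpe : act p e = p)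
    (hqe : act q e = q) (hpq : Reach act p q) : ∃ u, u = e * u * e ∧ act p u = q := by
  rcases hpq with rfl | ⟨t, rfl⟩
  · exact ⟨e, by rw [he, he], hpe⟩
  · exact ⟨e * t * e, mem_corner he t, by rwa [← hact, ← hact, hpe]⟩

theorem reach_iff_exists_act_mul (hact : RightAction act) (hqu : act q u = q) (z : Q) :
    Reach act z q ↔ ∃ w, act z (w * u) = q := by
  constructor
  · rintro (rfl | ⟨t, rfl⟩)
    · exact ⟨u, by rw [← hact, hqu, hqu]⟩
    · exact ⟨t, by rw [← hact, hqu]⟩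
  · rintro ⟨w, hw⟩
    exact Or.inr ⟨w * u, hw⟩

theorem reach_act_iff_of_forall_act_mul_eq (hact : RightAction act) (hqu : act q u = q)
    (hpq : ∀ y, act p (y * u) = act q (y * u)) (s : S) :
    Reach act (act p s) q ↔ Reach act (act q s) q := by
  simp only [reach_iff_exists_act_mul hact hqu, hact _ s, ← mul_assoc, hpq]

theorem LocXYXeqYX.act_mul_eq (hlaw : LocXYXeqYX S) (hact : RightAction act) (he : e * e = e)
    (hpe : act p e = p) (hu : u = e * u * e) (hpu : act p u = q) (y : S) :
    act p (y * u) = act q (y * u) := by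
  have hqe : act q e = q := by rw [← hpu, hact, mul_idem_of_mem_corner he hu]
  have hyu : e * y * e * u = e * (y * u) := by
    rw [mul_assoc (e * y), idem_mul_of_mem_corner he hu, mul_assoc]
  calc act p (y * u) = act p (e * y * e * u) := by rw [hyu, ← hact p e, hpe]
    _ = act p (u * (e * y * e) * u) := by rw [hlaw.mul_mul_self he hu (mem_corner he y)]
    _ = act q (e * y * e * u) := by simp only [← hpu, hact _ u, mul_assoc]
    _ = act q (y * u) := by rw [hyu, ← hact q e, hqe]

theorem eq_of_act_cycle (hli : LocIdem S) (hlaw : LocXYXeqYX S) (hact : RightAction act)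
    (he : e * e = e) (hs : s = e * s * e) (ht : t = e * t * e) (hps : act p s = q)
    (hrs : act r s = r) (hpt : act p t = r) (hqt : act q t = q) : r = q :=
  calc r = act p (t * s) := by rw [← hact, hpt, hrs]
    _ = act p (s * t * s) := by rw [hlaw.mul_mul_self he hs ht]
    _ = act q s := by rw [mul_assoc, ← hact, hps, ← hact, hqt]
    _ = q := by rw [← hps, hact, hli.mul_self he hs]

theorem LocIdem.locXYXeqYX_of_cycle (hli : LocIdem S) (hact : RightAction act)
    (hfaith : ∀ s t : S, (∀ q : Q, act q s = act q t) → s = t)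
    (hcycle : ∀ (p q r : Q) (e : S), e * e = e →
      act p e = p → act q e = q → act r e = r →
      ∀ s t : S, s = e * s * e → t = e * t * e →
        act p s = q → act r s = r → act p t = r → act q t = q → r = q) :
    LocXYXeqYX S := by
  refine locXYXeqYX_of_forall_mem_corner fun e x y he hx hy => ?_
  have hxyx := mul_mem_corner he (mul_mem_corner he hx hy) hx
  have hyx := mul_mem_corner he hy hx
  refine (hfaith _ _ fun z => ?_).symm
  exact hcycle (act z e) (act z (x * y * x)) (act z (y * x)) e he
    (by rw [hact, he]) (by rw [hact, mul_idem_of_mem_corner he hxyx])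
    (by rw [hact, mul_idem_of_mem_corner he hyx]) (x * y * x) (y * x) hxyx hyx
    (by rw [hact, idem_mul_of_mem_corner he hxyx]) (by rw [hact, hli.yx_mul_xyx he hx hy])
    (by rw [hact, idem_mul_of_mem_corner he hyx]) (by rw [hact, hli.xyx_mul_yx he hx hy])

end Action

theorem stmt13_general {Q S : Type*} [Semigroup S]
    (act : Q → S → Q) (hact : RightAction act)
    (hfaith : ∀ s t : S, (∀ q : Q, act q s = act q t) → s = t) :
    (LocIdem S ∧ LocXYXeqYX S) ↔
      (LocIdem S ∧
       (∀ (p q : Q) (e : S), e * e = e → act p e = p → act q e = q →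
          Reach act p q →
          ∀ s : S, (Reach act (act p s) q ↔ Reach act (act q s) q)) ∧
       (∀ (p q r : Q) (e : S), e * e = e →
          act p e = p → act q e = q → act r e = r →
          ∀ s t : S, s = e * s * e → t = e * t * e →
            act p s = q → act r s = r → act p t = r → act q t = q →
            r = q)) := by
  constructor
  · rintro ⟨hli, hlaw⟩
    refine ⟨hli, fun p q e he hpe hqe hpq s => ?_, fun p q r e he _ _ _ s t hs ht =>
      eq_of_act_cycle hli hlaw hact he hs ht⟩
    obtain ⟨u, hu, hpu⟩ := hpq.exists_mem_corner hact he hpe hqe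
    have hqu : act q u = q := by rw [← hpu, hact, hli.mul_self he hu]
    exact reach_act_iff_of_forall_act_mul_eq hact hqu (hlaw.act_mul_eq hact he hpe hu hpu) s
  · rintro ⟨hli, -, hcycle⟩
    exact ⟨hli, hli.locXYXeqYX_of_cycle hact hfaith hcycle⟩

theorem stmt13 {Q S : Type*} [Fintype Q] [Semigroup S] [Fintype S]
    (act : Q → S → Q) (hact : RightAction act)
    (hfaith : ∀ s t : S, (∀ q : Q, act q s = act q t) → s = t) :
    (LocIdem S ∧ LocXYXeqYX S) ↔
      (LocIdem S ∧
       (∀ (p q : Q) (e : S), e * e = e → act p e = p → act q e = q →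
          Reach act p q →
          ∀ s : S, (Reach act (act p s) q ↔ Reach act (act q s) q)) ∧
       (∀ (p q r : Q) (e : S), e * e = e →
          act p e = p → act q e = q → act r e = r →
          ∀ s t : S, s = e * s * e → t = e * t * e →
            act p s = q → act r s = r → act p t = r → act q t = q →
            r = q)) :=
  stmt13_general act hact hfaith
end

section
/- Let S be a finite semigroup. Then S is right locally testable (i.e., locally idempotent and locally satisfying xyx = xy) if and only if S is locally idempotent and no two distinct idempotents e, i lying in a common right-zero subsemigroup of S (i.e., with e·i = i and i·e = e) have a common right unit in S. -/
section

variable {S : Type*} [Semigroup S]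

theorem LocXYXeqXY.eq_of_rightZero_of_commonRightUnit (h : LocXYXeqXY S) {e i f : S}
    (he : e * e = e) (hei : e * i = i) (hie : i * e = e)
    (hf : f * f = f) (hef : e * f = e) (hif : i * f = i) : e = i := by
  have hex : e * (f * e * f) = e := by rw [← mul_assoc, ← mul_assoc, hef, he, hef]
  have hey : e * (f * i * f) = i := by rw [← mul_assoc, ← mul_assoc, hef, hei, hif]
  have hix : i * (f * e * f) = e := by rw [← mul_assoc, ← mul_assoc, hif, hie, hef]
  calc e = e * (f * e * f) * (f * i * f) * (f * e * f) := by rw [hex, hey, hix]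
    _ = e * ((f * e * f) * (f * i * f) * (f * e * f)) := by simp only [mul_assoc]
    _ = e * ((f * e * f) * (f * i * f)) := by rw [h f e i hf]
    _ = i := by rw [← mul_assoc, hex, hey]

theorem LocIdem.mul_self_eq_of_mul_left_of_mul_right (h : LocIdem S) {e x : S}
    (he : e * e = e) (hl : e * x = x) (hr : x * e = x) : x * x = x := by
  simpa only [hl, hr] using h e x he

theorem rightZero_mul_mul_of_idempotent {x y : S} (hx : x * x = x) (hxy : x * y * (x * y) = x * y) :
    x * y * x * (x * y) = x * y ∧ x * y * (x * y * x) = x * y * x := by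
  constructor
  · calc x * y * x * (x * y) = x * y * (x * y) := by simp only [mul_assoc, ← mul_assoc x x, hx]
      _ = x * y := hxy
  · rw [← mul_assoc, hxy]

theorem locXYXeqXY_of_locIdem (hLI : LocIdem S)
    (hno : ¬ ∃ e i f : S, e ≠ i ∧ e * e = e ∧ i * i = i ∧ e * i = i ∧ i * e = e ∧
      f * f = f ∧ e * f = e ∧ i * f = i) :
    LocXYXeqXY S := by
  intro e a b he
  set x := e * a * e
  set y := e * b * e
  have hxl : e * x = x := by simp only [x, ← mul_assoc, he]
  have hxr : x * e = x := by simp only [x, mul_assoc, he]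
  have hyr : y * e = y := by simp only [y, mul_assoc, he]
  clear_value x y
  have hxy : x * y * (x * y) = x * y :=
    hLI.mul_self_eq_of_mul_left_of_mul_right he (by rw [← mul_assoc, hxl])
      (by rw [mul_assoc, hyr])
  have hxyx : x * y * x * (x * y * x) = x * y * x :=
    hLI.mul_self_eq_of_mul_left_of_mul_right he (by rw [← mul_assoc, ← mul_assoc, hxl])
      (by rw [mul_assoc, hxr])
  obtain ⟨hleft, hright⟩ :=
    rightZero_mul_mul_of_idempotent (hLI.mul_self_eq_of_mul_left_of_mul_right he hxl hxr) hxy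
  by_contra hne
  exact hno ⟨x * y * x, x * y, e, hne, hxyx, hxy, hleft, hright, he,
    by rw [mul_assoc, hxr], by rw [mul_assoc, hyr]⟩

end

theorem stmt14_general {S : Type*} [Semigroup S] :
    (LocIdem S ∧ LocXYXeqXY S) ↔
      (LocIdem S ∧
        ¬ ∃ e i f : S, e ≠ i ∧ e * e = e ∧ i * i = i ∧ e * i = i ∧ i * e = e ∧
          f * f = f ∧ e * f = e ∧ i * f = i) := by
  constructor
  · rintro ⟨hLI, hXYX⟩
    refine ⟨hLI, ?_⟩
    rintro ⟨e, i, f, hne, he, -, hei, hie, hf, hef, hif⟩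
    exact hne (hXYX.eq_of_rightZero_of_commonRightUnit he hei hie hf hef hif)
  · rintro ⟨hLI, hno⟩
    exact ⟨hLI, locXYXeqXY_of_locIdem hLI hno⟩

theorem stmt14 {S : Type*} [Semigroup S] [Fintype S] :
    (LocIdem S ∧ LocXYXeqXY S) ↔
      (LocIdem S ∧
        ¬ ∃ e i f : S, e ≠ i ∧ e * e = e ∧ i * i = i ∧ e * i = i ∧ i * e = e ∧
          f * f = f ∧ e * f = e ∧ i * f = i) :=
  stmt14_general
end

section
/- Let S be a finite semigroup. Then S is left locally testable (locally idempotent and locally satisfying xyx = yx) if and only if S is locally idempotent and no two distinct idempotents e, i lying in a common left-zero subsemigroup of S (i.e., with e·i = e and i·e = i) have a common left unit in S (an idempotent f with f·e = e and f·i = i). -/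
section

variable {S : Type*} [Semigroup S]

theorem mul_self_eq_of_mul_eq_of_mul_eq {e i : S} (hei : e * i = e) (hie : i * e = i) :
    e * e = e :=
  calc e * e = e * i * e := by rw [hei]
    _ = e := by rw [mul_assoc, hie, hei]

theorem LocXYXeqYX.eq_of_mul_eq_of_mul_eq_of_left_unit (h : LocXYXeqYX S) {e i f : S}
    (hf : f * f = f) (hei : e * i = e) (hie : i * e = i) (hfe : f * e = e) (hfi : f * i = i) :
    e = i := by
  have he : e * e = e := mul_self_eq_of_mul_eq_of_mul_eq hei hie
  have hef : e * f = i * f := by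
    have key := h f e i hf
    rw [hfe, hfi] at key
    calc e * f = e * (f * i) * (f * e) * f := by rw [hfi, hfe, hei, he]
      _ = e * f * (i * f) * (e * f) := by simp only [mul_assoc]
      _ = i * f * (e * f) := key
      _ = i * f := by rw [mul_assoc, ← mul_assoc f, hfe, ← mul_assoc, hie]
  calc e = e * f * e := by rw [mul_assoc, hfe, he]
    _ = i := by rw [hef, mul_assoc, hfe, hie]

theorem leftZero_pair_of_idempotent {x y : S} (hx : x * x = x)
    (hyx : y * x * (y * x) = y * x) :
    x * y * x * (y * x) = x * y * x ∧ y * x * (x * y * x) = y * x := by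
  constructor
  · rw [mul_assoc x y x, mul_assoc, hyx]
  · rw [← mul_assoc, ← mul_assoc, mul_assoc y x x, hx, mul_assoc, hyx]

theorem LocIdem.locXYXeqYX (hI : LocIdem S)
    (hS : ¬ ∃ e i f : S, e ≠ i ∧ e * e = e ∧ i * i = i ∧ e * i = e ∧ i * e = i ∧
      f * f = f ∧ f * e = e ∧ f * i = i) :
    LocXYXeqYX S := by
  intro f a b hf
  have hff (s : S) : f * (f * s) = f * s := by rw [← mul_assoc, hf]
  have hyx : f * b * f * (f * a * f) * (f * b * f * (f * a * f)) = f * b * f * (f * a * f) := by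
    simpa only [mul_assoc] using hI f (b * f * f * a) hf
  obtain ⟨hei, hie⟩ := leftZero_pair_of_idempotent (hI f a hf) hyx
  by_contra hne
  exact hS ⟨_, _, f, hne, mul_self_eq_of_mul_eq_of_mul_eq hei hie,
    mul_self_eq_of_mul_eq_of_mul_eq hie hei, hei, hie, hf,
    by simp only [mul_assoc, hff], by simp only [mul_assoc, hff]⟩

end

theorem stmt15_general {S : Type*} [Semigroup S] :
    (LocIdem S ∧ LocXYXeqYX S) ↔
      (LocIdem S ∧
        ¬ ∃ e i f : S, e ≠ i ∧ e * e = e ∧ i * i = i ∧ e * i = e ∧ i * e = i ∧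
          f * f = f ∧ f * e = e ∧ f * i = i) := by
  refine and_congr_right fun hI => ⟨?_, hI.locXYXeqYX⟩
  rintro hX ⟨e, i, f, hne, -, -, hei, hie, hf, hfe, hfi⟩
  exact hne (hX.eq_of_mul_eq_of_mul_eq_of_left_unit hf hei hie hfe hfi)

theorem stmt15 {S : Type*} [Semigroup S] [Fintype S] :
    (LocIdem S ∧ LocXYXeqYX S) ↔
      (LocIdem S ∧
        ¬ ∃ e i f : S, e ≠ i ∧ e * e = e ∧ i * i = i ∧ e * i = e ∧ i * e = i ∧
          f * f = f ∧ f * e = e ∧ f * i = i) :=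
  stmt15_general
end
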